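/- arXiv:2310.01305 — 10 statements merged into one kernel-verified Lean document; each statement's English description precedes it below -/
import Mathlib

section
/- Let n be a 2-near perfect number with omitted divisors d₁ and d₂, and suppose n = 2^k · p where p is an odd prime and k is a positive integer. Then (after possibly swapping d₁ and d₂) one of the following four cases holds: (1) p = 2^k − 1, with d₁ = 1 and d₂ = p; (2) there exist natural numbers a, b with 0 < a < b ≤ k such that p = 2^(k+1) − 2^a − 2^b − 1, d₁ = 2^a and d₂ = 2^b; (3) there exist natural numbers a, b with 0 < a ≤ k and 0 < b ≤ k such that p · (1 + 2^b) = 2^(k+1) − 2^a − 1, d₁ = 2^a and d₂ = 2^b · p; (4) there exist natural numbers a, b with 0 < a < b ≤ k such that p · (1 + 2^a + 2^b) = 2^(k+1) − 1, d₁ = 2^a · p and d₂ = 2^b · p. -/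
/-!
Multiplicativity gives `σ(2ᵏp) = (2ᵏ⁺¹ - 1)(p + 1)`, so the defining equation collapses to the
linear relation `d₁ + d₂ + p + 1 = 2ᵏ⁺¹`. Every divisor is `2ᵃ` or `2ᵃp`, and since `p + 1` and
`2ᵏ⁺¹` are even, `d₁` and `d₂` have the same parity. Two distinct odd divisors can only be `1` and
`p`, giving case (1); two even divisors give cases (2)–(4) according to how many of them carry
the factor `p`.
-/

open ArithmeticFunction
open scoped ArithmeticFunction.sigma

theorem sigma_one_two_pow_add_one (k : ℕ) : σ 1 (2 ^ k) + 1 = 2 ^ (k + 1) := by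
  rw [sigma_one_apply_prime_pow Nat.prime_two, Nat.geomSum_eq le_rfl]
  have := Nat.one_le_two_pow (n := k + 1)
  simp only [Nat.add_one_sub_one, Nat.div_one]
  omega

theorem sigma_one_prime {p : ℕ} (hp : p.Prime) : σ 1 p = p + 1 := by
  simpa [geom_sum_two] using sigma_one_apply_prime_pow hp (i := 1)

theorem sigma_one_mul_prime {m p : ℕ} (hp : p.Prime) (hmp : m.Coprime p) :
    σ 1 (m * p) = σ 1 m * (p + 1) := by
  rw [isMultiplicative_sigma.map_mul_of_coprime hmp, sigma_one_prime hp]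

theorem exists_eq_pow_or_eq_pow_mul_of_dvd_pow_mul {q p k d : ℕ} (hq : q.Prime) (hp : p.Prime)
    (hd : d ∣ q ^ k * p) : ∃ a ≤ k, d = q ^ a ∨ d = q ^ a * p := by
  obtain ⟨x, y, hx, hy, rfl⟩ := Nat.dvd_mul.mp hd
  obtain ⟨a, ha, rfl⟩ := (Nat.dvd_prime_pow hq).mp hx
  rcases (Nat.dvd_prime hp).mp hy with rfl | rfl
  exacts [⟨a, ha, .inl (mul_one _)⟩, ⟨a, ha, .inr rfl⟩]

theorem add_add_add_one_eq_two_pow_of_sigma_eq {k p d₁ d₂ : ℕ} (hp : p.Prime) (hpodd : Odd p)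
    (hσ : σ 1 (2 ^ k * p) = 2 * (2 ^ k * p) + d₁ + d₂) : d₁ + d₂ + p + 1 = 2 ^ (k + 1) := by
  rw [sigma_one_mul_prime hp ((Nat.coprime_two_left.mpr hpodd).pow_left k)] at hσ
  have hs := sigma_one_two_pow_add_one k
  rw [pow_succ] at hs ⊢
  linear_combination hs * (p + 1) - hσ

theorem even_iff_ne_zero_of_eq_two_pow_or_eq_two_pow_mul {a p d : ℕ} (hpodd : Odd p)
    (hd : d = 2 ^ a ∨ d = 2 ^ a * p) : Even d ↔ a ≠ 0 := by
  rcases hd with rfl | rfl <;> simp [Nat.even_pow, Nat.even_mul, Nat.not_even_iff_odd.mpr hpodd]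

def TwoNearPerfectCases (k p e₁ e₂ : ℕ) : Prop :=
  (p = 2 ^ k - 1 ∧ e₁ = 1 ∧ e₂ = p) ∨
  (∃ a b : ℕ, 0 < a ∧ a < b ∧ b ≤ k ∧
    p = 2 ^ (k + 1) - 2 ^ a - 2 ^ b - 1 ∧ e₁ = 2 ^ a ∧ e₂ = 2 ^ b) ∨
  (∃ a b : ℕ, 0 < a ∧ a ≤ k ∧ 0 < b ∧ b ≤ k ∧
    p * (1 + 2 ^ b) = 2 ^ (k + 1) - 2 ^ a - 1 ∧ e₁ = 2 ^ a ∧ e₂ = 2 ^ b * p) ∨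
  (∃ a b : ℕ, 0 < a ∧ a < b ∧ b ≤ k ∧
    p * (1 + 2 ^ a + 2 ^ b) = 2 ^ (k + 1) - 1 ∧ e₁ = 2 ^ a * p ∧ e₂ = 2 ^ b * p)

section
variable {k p a b d₁ d₂ : ℕ}

theorem twoNearPerfectCases_one_prime_or_swap (hne : d₁ ≠ d₂)
    (h₁ : d₁ = 1 ∨ d₁ = p) (h₂ : d₂ = 1 ∨ d₂ = p) (hsum : d₁ + d₂ + p + 1 = 2 ^ (k + 1)) :
    TwoNearPerfectCases k p d₁ d₂ ∨ TwoNearPerfectCases k p d₂ d₁ := by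
  have hp : p = 2 ^ k - 1 := by rw [pow_succ] at hsum; omega
  rcases h₁ with rfl | rfl <;> rcases h₂ with rfl | rfl
  exacts [absurd rfl hne, .inl (.inl ⟨hp, rfl, rfl⟩), .inr (.inl ⟨hp, rfl, rfl⟩), absurd rfl hne]

theorem twoNearPerfectCases_or_swap_of_pos (ha : 0 < a) (hb : 0 < b) (hak : a ≤ k) (hbk : b ≤ k)
    (hne : d₁ ≠ d₂) (h₁ : d₁ = 2 ^ a ∨ d₁ = 2 ^ a * p) (h₂ : d₂ = 2 ^ b ∨ d₂ = 2 ^ b * p)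
    (hsum : d₁ + d₂ + p + 1 = 2 ^ (k + 1)) :
    TwoNearPerfectCases k p d₁ d₂ ∨ TwoNearPerfectCases k p d₂ d₁ := by
  rcases h₁ with rfl | rfl <;> rcases h₂ with rfl | rfl
  · rcases Nat.lt_or_gt_of_ne (fun hab : a = b ↦ hne (hab ▸ rfl)) with hab | hab
    · exact .inl (.inr (.inl ⟨a, b, ha, hab, hbk, by omega, rfl, rfl⟩))
    · exact .inr (.inr (.inl ⟨b, a, hb, hab, hak, by omega, rfl, rfl⟩))
  · refine .inl (.inr (.inr (.inl ⟨a, b, ha, hak, hb, hbk, ?_, rfl, rfl⟩)))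
    rw [mul_add, mul_one, mul_comm p]
    omega
  · refine .inr (.inr (.inr (.inl ⟨b, a, hb, hbk, ha, hak, ?_, rfl, rfl⟩)))
    rw [mul_add, mul_one, mul_comm p]
    omega
  · rcases Nat.lt_or_gt_of_ne (fun hab : a = b ↦ hne (hab ▸ rfl)) with hab | hab
    · refine .inl (.inr (.inr (.inr ⟨a, b, ha, hab, hbk, ?_, rfl, rfl⟩)))
      rw [mul_add, mul_add, mul_one, mul_comm p, mul_comm p]
      omega
    · refine .inr (.inr (.inr (.inr ⟨b, a, hb, hab, hak, ?_, rfl, rfl⟩)))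
      rw [mul_add, mul_add, mul_one, mul_comm p, mul_comm p]
      omega

theorem twoNearPerfectCases_or_swap (hpodd : Odd p) (hak : a ≤ k) (hbk : b ≤ k) (hne : d₁ ≠ d₂)
    (h₁ : d₁ = 2 ^ a ∨ d₁ = 2 ^ a * p) (h₂ : d₂ = 2 ^ b ∨ d₂ = 2 ^ b * p)
    (hsum : d₁ + d₂ + p + 1 = 2 ^ (k + 1)) :
    TwoNearPerfectCases k p d₁ d₂ ∨ TwoNearPerfectCases k p d₂ d₁ := by
  have hpar : a ≠ 0 ↔ b ≠ 0 := by
    have heven : Even (d₁ + d₂ + (p + 1)) := by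
      rw [← add_assoc, hsum, pow_succ]
      exact even_two.mul_left _
    rwa [Nat.even_add, iff_true_right hpodd.add_one, Nat.even_add,
      even_iff_ne_zero_of_eq_two_pow_or_eq_two_pow_mul hpodd h₁,
      even_iff_ne_zero_of_eq_two_pow_or_eq_two_pow_mul hpodd h₂] at heven
  by_cases ha : a = 0
  · have hb : b = 0 := by tauto
    subst ha hb
    simp only [pow_zero, one_mul] at h₁ h₂
    exact twoNearPerfectCases_one_prime_or_swap hne h₁ h₂ hsum
  · exact twoNearPerfectCases_or_swap_of_pos (by omega) (by omega) hak hbk hne h₁ h₂ hsum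

end

theorem two_near_perfect_pow_two_mul_prime_general
    (n k p d₁ d₂ : ℕ) (hp : p.Prime) (hpodd : Odd p)
    (hn : n = 2 ^ k * p)
    (hd₁ : d₁ ∣ n) (hd₂ : d₂ ∣ n)
    (hne : d₁ ≠ d₂) (hσ : σ 1 n = 2 * n + d₁ + d₂) :
    ∃ e₁ e₂ : ℕ, ((e₁ = d₁ ∧ e₂ = d₂) ∨ (e₁ = d₂ ∧ e₂ = d₁)) ∧
      ((p = 2 ^ k - 1 ∧ e₁ = 1 ∧ e₂ = p) ∨
       (∃ a b : ℕ, 0 < a ∧ a < b ∧ b ≤ k ∧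
          p = 2 ^ (k + 1) - 2 ^ a - 2 ^ b - 1 ∧ e₁ = 2 ^ a ∧ e₂ = 2 ^ b) ∨
       (∃ a b : ℕ, 0 < a ∧ a ≤ k ∧ 0 < b ∧ b ≤ k ∧
          p * (1 + 2 ^ b) = 2 ^ (k + 1) - 2 ^ a - 1 ∧ e₁ = 2 ^ a ∧ e₂ = 2 ^ b * p) ∨
       (∃ a b : ℕ, 0 < a ∧ a < b ∧ b ≤ k ∧
          p * (1 + 2 ^ a + 2 ^ b) = 2 ^ (k + 1) - 1 ∧ e₁ = 2 ^ a * p ∧ e₂ = 2 ^ b * p)) := by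
  subst hn
  obtain ⟨a, ha, h₁⟩ := exists_eq_pow_or_eq_pow_mul_of_dvd_pow_mul Nat.prime_two hp hd₁
  obtain ⟨b, hb, h₂⟩ := exists_eq_pow_or_eq_pow_mul_of_dvd_pow_mul Nat.prime_two hp hd₂
  have hsum := add_add_add_one_eq_two_pow_of_sigma_eq hp hpodd hσ
  rcases twoNearPerfectCases_or_swap hpodd ha hb hne h₁ h₂ hsum with h | h
  exacts [⟨d₁, d₂, .inl ⟨rfl, rfl⟩, h⟩, ⟨d₂, d₁, .inr ⟨rfl, rfl⟩, h⟩]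

theorem two_near_perfect_pow_two_mul_prime
    (n k p d₁ d₂ : ℕ) (hk : 0 < k) (hp : p.Prime) (hpodd : Odd p)
    (hn : n = 2 ^ k * p)
    (hd₁ : d₁ ∣ n) (hd₂ : d₂ ∣ n) (hd₁pos : 0 < d₁) (hd₂pos : 0 < d₂)
    (hne : d₁ ≠ d₂) (hσ : σ 1 n = 2 * n + d₁ + d₂) :
    ∃ e₁ e₂ : ℕ, ((e₁ = d₁ ∧ e₂ = d₂) ∨ (e₁ = d₂ ∧ e₂ = d₁)) ∧
      ((p = 2 ^ k - 1 ∧ e₁ = 1 ∧ e₂ = p) ∨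
       (∃ a b : ℕ, 0 < a ∧ a < b ∧ b ≤ k ∧
          p = 2 ^ (k + 1) - 2 ^ a - 2 ^ b - 1 ∧ e₁ = 2 ^ a ∧ e₂ = 2 ^ b) ∨
       (∃ a b : ℕ, 0 < a ∧ a ≤ k ∧ 0 < b ∧ b ≤ k ∧
          p * (1 + 2 ^ b) = 2 ^ (k + 1) - 2 ^ a - 1 ∧ e₁ = 2 ^ a ∧ e₂ = 2 ^ b * p) ∨
       (∃ a b : ℕ, 0 < a ∧ a < b ∧ b ≤ k ∧
          p * (1 + 2 ^ a + 2 ^ b) = 2 ^ (k + 1) - 1 ∧ e₁ = 2 ^ a * p ∧ e₂ = 2 ^ b * p)) :=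
  two_near_perfect_pow_two_mul_prime_general n k p d₁ d₂ hp hpodd hn hd₁ hd₂ hne hσ
end

section
/- Let n be a 2-near perfect number of the form n = 2^k · p^2, where p is an odd prime and k is a positive integer. Then n ∈ {18, 36, 200}. -/
/-!
Since `σ(2^k p^2) = (2^(k+1) - 1)(p^2 + p + 1)`, the condition reads
`d₁ + d₂ = 2^(k+1) (p + 1) - (p^2 + p + 1)`, an odd number, so one divisor is odd, `p^b`, and the
other is `2^a p^c` with `1 ≤ a ≤ k`. Writing `Q = 2^(k+1)` and `A = 2^a`, so that `2A ∣ Q`, each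
of the nine choices of `b, c ≤ 2` is settled by size estimates together with the congruences
modulo `p` and `p + 1` that the equation forces, and divisibility by `A`.
-/

open ArithmeticFunction
open scoped ArithmeticFunction.sigma

theorem sigma_one_two_pow_mul_of_odd {m : ℕ} (hm : Odd m) (k : ℕ) :
    σ 1 (2 ^ k * m) + σ 1 m = 2 ^ (k + 1) * σ 1 m := by
  have h2 : σ 1 (2 ^ k) + 1 = 2 ^ (k + 1) := by
    rw [sigma_one_apply_prime_pow Nat.prime_two]
    have := geom_sum_mul_add 1 (k + 1)
    norm_num at this
    exact this
  rw [isMultiplicative_sigma.map_mul_of_coprime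
    (Nat.Coprime.pow_left k (Nat.coprime_two_left.2 hm)), ← h2, add_mul, one_mul]

theorem sigma_one_prime_sq {p : ℕ} (hp : p.Prime) : σ 1 (p ^ 2) = p ^ 2 + p + 1 := by
  simp only [sigma_one_apply_prime_pow hp, Finset.sum_range_succ, Finset.sum_range_zero]
  ring

theorem exists_eq_pow_mul_pow_of_dvd {q r k m d : ℕ} (hq : q.Prime) (hr : r.Prime)
    (h : d ∣ q ^ k * r ^ m) : ∃ a ≤ k, ∃ b ≤ m, d = q ^ a * r ^ b := by
  obtain ⟨x, y, hx, hy, rfl⟩ := Nat.dvd_mul.mp h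
  obtain ⟨a, ha, rfl⟩ := (Nat.dvd_prime_pow hq).mp hx
  obtain ⟨b, hb, rfl⟩ := (Nat.dvd_prime_pow hr).mp hy
  exact ⟨a, ha, b, hb, rfl⟩

theorem exists_add_eq_pow_add_two_pow_mul_pow {p k m d₁ d₂ : ℕ} (hp : p.Prime) (hpodd : Odd p)
    (h₁ : d₁ ∣ 2 ^ k * p ^ m) (h₂ : d₂ ∣ 2 ^ k * p ^ m) (hd : Odd (d₁ + d₂)) :
    ∃ a b c, 0 < a ∧ a ≤ k ∧ b ≤ m ∧ c ≤ m ∧ d₁ + d₂ = p ^ b + 2 ^ a * p ^ c := by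
  obtain ⟨a₁, ha₁, b₁, hb₁, rfl⟩ := exists_eq_pow_mul_pow_of_dvd Nat.prime_two hp h₁
  obtain ⟨a₂, ha₂, b₂, hb₂, rfl⟩ := exists_eq_pow_mul_pow_of_dvd Nat.prime_two hp h₂
  have hodd : ∀ a b, Odd (2 ^ a * p ^ b) ↔ a = 0 := fun a b => by
    rw [Nat.odd_mul, and_iff_left hpodd.pow, ← Nat.not_even_iff_odd, Nat.even_pow]
    simp
  rw [Nat.odd_add', hodd, ← Nat.not_odd_iff_even, hodd] at hd
  rcases Nat.eq_zero_or_pos a₁ with rfl | ha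
  · exact ⟨a₂, b₁, b₂, by omega, ha₂, hb₁, hb₂, by simp⟩
  · exact ⟨a₁, b₂, b₁, ha, ha₁, hb₂, hb₁, by rw [(by omega : a₂ = 0)]; simp [add_comm]⟩

/-- With `Q = 2^(k+1)` and `A = 2^a`, this is `σ(n) = 2n + p^b + 2^a p^c` for `n = 2^k p^2`. -/
def TwoNearPerfectEq (p Q A : ℤ) (b c : ℕ) : Prop :=
  Q * (p + 1) = p ^ 2 + p + 1 + p ^ b + A * p ^ c

theorem exists_twoNearPerfectEq {k p d₁ d₂ : ℕ} (hp : p.Prime) (hpodd : Odd p)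
    (hd₁ : d₁ ∣ 2 ^ k * p ^ 2) (hd₂ : d₂ ∣ 2 ^ k * p ^ 2)
    (hσ : σ 1 (2 ^ k * p ^ 2) = 2 * (2 ^ k * p ^ 2) + d₁ + d₂) :
    ∃ a b c, 0 < a ∧ a ≤ k ∧ b ≤ 2 ∧ c ≤ 2 ∧
      TwoNearPerfectEq p ((2 : ℤ) ^ (k + 1)) ((2 : ℤ) ^ a) b c := by
  have hsum : p ^ 2 + p + 1 + (d₁ + d₂) = 2 ^ (k + 1) * (p + 1) := by
    have := sigma_one_two_pow_mul_of_odd (hpodd.pow (n := 2)) k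
    rw [sigma_one_prime_sq hp, hσ] at this
    have : 2 ^ (k + 1) * (p ^ 2 + p + 1) = 2 * (2 ^ k * p ^ 2) + 2 ^ (k + 1) * (p + 1) := by ring
    omega
  have hodd : Odd (d₁ + d₂) := by
    have := (Nat.even_pow.2 ⟨even_two, k.succ_ne_zero⟩).mul_right (p + 1)
    rw [← hsum] at this
    rw [← Nat.not_even_iff_odd]
    simpa [Nat.even_add, Nat.even_pow, parity_simps] using this
  obtain ⟨a, b, c, ha, hak, hb, hc, hd⟩ :=
    exists_add_eq_pow_add_two_pow_mul_pow hp hpodd hd₁ hd₂ hodd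
  refine ⟨a, b, c, ha, hak, hb, hc, ?_⟩
  rw [hd, ← add_assoc] at hsum
  unfold TwoNearPerfectEq
  exact_mod_cast hsum.symm

namespace TwoNearPerfectEq

variable {p Q A : ℤ} {b c : ℕ}

theorem pos (h : TwoNearPerfectEq p Q A b c) (hp : 0 ≤ p) (hA : 0 ≤ A) : 0 < Q := by
  have : 0 < Q * (p + 1) := by rw [h]; positivity
  exact pos_of_mul_pos_left this (by linarith)

theorem two_mul_le (h : TwoNearPerfectEq p Q A b c) (hp : 0 ≤ p) (hA : 0 ≤ A)
    (hAQ : 2 * A ∣ Q) : 2 * A ≤ Q :=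
  Int.le_of_dvd (h.pos hp hA) hAQ

theorem eq_of_zero_zero (h : TwoNearPerfectEq p Q A 0 0) (hp : 3 ≤ p) (hA : 0 ≤ A)
    (hAQ : 2 * A ∣ Q) : p = 3 ∧ Q = 4 := by
  have hle := h.two_mul_le (by linarith) hA hAQ
  simp only [TwoNearPerfectEq, pow_zero, mul_one] at h
  have hQp : p + 1 ≤ Q := by nlinarith
  obtain rfl : p = 3 := by nlinarith
  exact ⟨rfl, by nlinarith⟩

theorem not_zero_one (hp : Odd p) (hp3 : 3 ≤ p) (hA : 0 ≤ A) (hAQ : 2 * A ∣ Q) :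
    ¬ TwoNearPerfectEq p Q A 0 1 := by
  intro h
  have hle := h.two_mul_le (by linarith) hA hAQ
  simp only [TwoNearPerfectEq, pow_zero, pow_one] at h
  -- `Q ≡ 2 (mod p)` with `Q` even and `p` odd, so `Q ≥ 2 p + 2`, which is too large
  obtain ⟨t, hQ⟩ : ∃ t, Q = 2 + t * p := ⟨p + 1 + A - Q, by linear_combination h⟩
  have ht : 2 ≤ t := by
    have : 0 < t := by nlinarith
    have : t ≠ 1 := by
      rintro rfl
      obtain ⟨s, rfl⟩ := hp
      obtain ⟨R, rfl⟩ := dvd_trans (dvd_mul_right 2 A) hAQ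
      omega
    omega
  nlinarith

theorem eq_of_zero_two (h : TwoNearPerfectEq p Q A 0 2) (hp : 3 ≤ p) (hA : 0 ≤ A)
    (hAQ : A ∣ Q) : p = 3 ∧ Q = 8 := by
  simp only [TwoNearPerfectEq, pow_zero] at h
  -- `p + 1 ∣ A + 2` with quotient `w`, and `A ∣ Q - (p - 1) A = p + w` forces `w = 1`
  obtain ⟨w, hwdef⟩ : ∃ w, w = Q - p - A * p + A := ⟨_, rfl⟩
  have hAw : A + 2 = (p + 1) * w := by linear_combination -h - (p + 1) * hwdef
  have hw1 : 1 ≤ w := by nlinarith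
  have hApw : A ∣ p + w := by
    have : p + w = Q - (p - 1) * A := by rw [hwdef]; ring
    rw [this]; exact dvd_sub hAQ (dvd_mul_left A _)
  have hAle : A ≤ p + w := Int.le_of_dvd (by linarith) hApw
  obtain rfl : w = 1 := by nlinarith
  have hA2 : A ∣ 2 := by
    have : (2 : ℤ) = p + 1 - A := by linarith
    rw [this]; exact dvd_sub hApw dvd_rfl
  have := Int.le_of_dvd two_pos hA2
  obtain rfl : p = 3 := by linarith
  exact ⟨rfl, by linarith⟩

theorem not_one_zero (hp : 1 ≤ p) (hA : 0 < A) (hAQ : 2 * A ∣ Q) :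
    ¬ TwoNearPerfectEq p Q A 1 0 := by
  intro h
  have hle := h.two_mul_le (by linarith) hA.le hAQ
  simp only [TwoNearPerfectEq, pow_zero, pow_one, mul_one] at h
  have : p + 2 ≤ Q := by nlinarith
  nlinarith

theorem not_one_one (hp : 1 ≤ p) (hA : 0 < A) (hAQ : 2 * A ∣ Q) :
    ¬ TwoNearPerfectEq p Q A 1 1 := by
  intro h
  have hle := h.two_mul_le (by linarith) hA.le hAQ
  simp only [TwoNearPerfectEq, pow_one] at h
  -- `p + 1 ∣ A ∣ Q`, but `p + 1 < Q < 2 (p + 1)`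
  have hpA : p + 1 ∣ A := by
    have : p + 1 ∣ A * p := ⟨Q - (p + 1), by linear_combination -h⟩
    exact IsCoprime.dvd_of_dvd_mul_right ⟨1, -1, by ring⟩ this
  obtain ⟨m, hm⟩ := dvd_trans hpA (dvd_trans (dvd_mul_left A 2) hAQ)
  have h1 : 1 < m := by nlinarith
  have h2 : m < 2 := by nlinarith
  omega

theorem not_one_two (hp : 2 ≤ p) (hA : 0 < A) (hAQ : A ∣ Q) :
    ¬ TwoNearPerfectEq p Q A 1 2 := by
  intro h
  simp only [TwoNearPerfectEq, pow_one] at h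
  have hcop : IsCoprime (p + 1) p := ⟨1, -1, by ring⟩
  obtain ⟨j, hj⟩ : p + 1 ∣ A :=
    (hcop.pow_right (n := 2)).dvd_of_dvd_mul_right ⟨Q - (p + 1), by linear_combination -h⟩
  have hQ : Q = p + 1 + j * p ^ 2 := by
    have : (p + 1) * Q = (p + 1) * (p + 1 + j * p ^ 2) := by rw [hj] at h; linear_combination h
    exact mul_left_cancel₀ (by linarith) this
  -- both `j` and `p + 1` divide `Q = p + 1 + j p ^ 2`, so `j = p + 1`,
  -- and then `A ∣ Q` gives `p + 1 ∣ 2`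
  have hjQ : j ∣ Q := dvd_trans ⟨p + 1, by rw [hj]; ring⟩ hAQ
  have hpQ : p + 1 ∣ Q := dvd_trans ⟨j, hj⟩ hAQ
  have hj1 : j ∣ p + 1 := by
    have : p + 1 = Q - p ^ 2 * j := by rw [hQ]; ring
    rw [this]; exact dvd_sub hjQ (dvd_mul_left j _)
  have hj2 : p + 1 ∣ j := by
    have : p + 1 ∣ j * p ^ 2 := by
      have : j * p ^ 2 = Q - (p + 1) := by rw [hQ]; ring
      rw [this]; exact dvd_sub hpQ dvd_rfl
    exact (hcop.pow_right (n := 2)).dvd_of_dvd_mul_right this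
  have hj0 : 0 ≤ j := by nlinarith
  have hjp : j = p + 1 := Int.dvd_antisymm hj0 (by linarith) hj1 hj2
  subst hjp
  have h2 : p + 1 ∣ 2 := by
    have : (p + 1) * (p + 1) ∣ (p + 1) * (p ^ 2 + 1) := by
      rw [← hj, show (p + 1) * (p ^ 2 + 1) = Q by rw [hQ]; ring]; exact hAQ
    have := (mul_dvd_mul_iff_left (by linarith : p + 1 ≠ 0)).mp this
    have e : (2 : ℤ) = p ^ 2 + 1 - (p - 1) * (p + 1) := by ring
    rw [e]; exact dvd_sub this (dvd_mul_left _ _)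
  have := Int.le_of_dvd two_pos h2
  linarith

theorem not_two_zero (hp : Odd p) (hp0 : 0 ≤ p) (hA : 2 ∣ A) (hA0 : 0 ≤ A) (hAQ : 2 * A ∣ Q) :
    ¬ TwoNearPerfectEq p Q A 2 0 := by
  intro h
  have hle := h.two_mul_le hp0 hA0 hAQ
  simp only [TwoNearPerfectEq, pow_zero, mul_one] at h
  have hp1 : 1 ≤ p := by obtain ⟨s, rfl⟩ := hp; omega
  have h1 : 2 * p ≤ Q := by nlinarith
  have h2 : Q ≤ 2 * p := by nlinarith
  obtain ⟨s, rfl⟩ := hp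
  obtain ⟨R, rfl⟩ := dvd_trans (mul_dvd_mul_left 2 hA) hAQ
  omega

theorem eq_of_two_one (h : TwoNearPerfectEq p Q A 2 1) (hp : 3 ≤ p) (hA : 0 ≤ A)
    (hAQ : 2 * A ∣ Q) : p = 5 ∧ Q = 16 := by
  have hle := h.two_mul_le (by linarith) hA hAQ
  simp only [TwoNearPerfectEq, pow_one] at h
  -- `Q = m p + 1`, and `2 A ≤ Q` leaves only `m ≤ 3`
  obtain ⟨m, hmdef⟩ : ∃ m, m = 2 * p + 1 + A - Q := ⟨_, rfl⟩
  have hQ : Q = m * p + 1 := by linear_combination h - p * hmdef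
  have hm : m * (p + 1) = 2 * p + A := by linear_combination -h + (p + 1) * hmdef
  have hm1 : 1 ≤ m := by nlinarith
  have hm3 : m ≤ 3 := by nlinarith
  obtain ⟨R, hR⟩ := hAQ
  interval_cases m
  · linarith
  · obtain rfl : A = 2 := by linarith
    omega
  · have hA8 : A ∣ 8 := ⟨3 - 2 * R, by linear_combination 3 * hm + hQ - hR⟩
    have := Int.le_of_dvd (by norm_num) hA8
    have hp5 : p ≤ 5 := by linarith
    interval_cases p <;> norm_num at hm hA8 hQ ⊢ <;> omega

theorem not_two_two (hp : Odd p) (hp2 : 2 ≤ p) (hA : 2 ∣ A) (hA0 : 0 ≤ A) (hAQ : 2 * A ∣ Q) :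
    ¬ TwoNearPerfectEq p Q A 2 2 := by
  intro h
  simp only [TwoNearPerfectEq] at h
  obtain ⟨m, hmdef⟩ : ∃ m, m = 2 * p + 1 + A * p - Q := ⟨_, rfl⟩
  have hQ : Q = m * p + 1 := by linear_combination h - p * hmdef
  have hm : m * (p + 1) = (2 + A) * p := by linear_combination -h + (p + 1) * hmdef
  have hcop : IsCoprime p (p + 1) := ⟨-1, 1, by ring⟩
  obtain ⟨w, rfl⟩ : p ∣ m := hcop.dvd_of_dvd_mul_right ⟨2 + A, by linear_combination hm⟩
  have hw : w * (p + 1) = 2 + A := by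
    have : p * (w * (p + 1)) = p * (2 + A) := by linear_combination hm
    exact mul_left_cancel₀ (by linarith) this
  have h4 : 4 ∣ Q := dvd_trans (mul_dvd_mul_left 2 hA) hAQ
  obtain ⟨R, hR⟩ := hAQ
  have hw1 : 1 ≤ w := by nlinarith
  rcases (show w = 1 ∨ w = 2 ∨ 3 ≤ w by omega) with rfl | rfl | hw3
  · -- `Q = p ^ 2 + 1 ≡ 2 (mod 4)` but `4 ∣ Q`
    have := Int.sq_mod_four_eq_one_of_odd hp
    have : Q = p ^ 2 + 1 := by rw [hQ]; ring
    omega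
  · have : Q = 2 * p ^ 2 + 1 := by rw [hQ]; ring
    omega
  · -- `0 < A p - Q < A`, yet `A ∣ A p - Q`
    have hX : A * p - Q = A * (p - 2 * R) := by rw [hR]; ring
    have h1 : 0 < A * (p - 2 * R) := by nlinarith
    have h2 : A * (p - 2 * R) < A := by nlinarith
    have : 0 < p - 2 * R := pos_of_mul_pos_right h1 (by omega)
    nlinarith

theorem eq_of_le_two (h : TwoNearPerfectEq p Q A b c) (hb : b ≤ 2) (hc : c ≤ 2) (hp : Odd p)
    (hp3 : 3 ≤ p) (hA : 0 < A) (hA2 : 2 ∣ A) (hAQ : 2 * A ∣ Q) :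
    p = 3 ∧ Q = 4 ∨ p = 3 ∧ Q = 8 ∨ p = 5 ∧ Q = 16 := by
  have hAQ' : A ∣ Q := dvd_trans (dvd_mul_left A 2) hAQ
  interval_cases b <;> interval_cases c
  · exact Or.inl (h.eq_of_zero_zero hp3 hA.le hAQ)
  · exact absurd h (not_zero_one hp hp3 hA.le hAQ)
  · exact Or.inr (Or.inl (h.eq_of_zero_two hp3 hA.le hAQ'))
  · exact absurd h (not_one_zero (by linarith) hA hAQ)
  · exact absurd h (not_one_one (by linarith) hA hAQ)
  · exact absurd h (not_one_two (by linarith) hA hAQ')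
  · exact absurd h (not_two_zero hp (by linarith) hA2 hA.le hAQ)
  · exact Or.inr (Or.inr (h.eq_of_two_one hp3 hA.le hAQ))
  · exact absurd h (not_two_two hp (by linarith) hA2 hA.le hAQ)

end TwoNearPerfectEq

theorem two_near_perfect_pow_two_mul_prime_sq_general
    (n k p : ℕ) (hp : p.Prime) (hpodd : Odd p)
    (hn : n = 2 ^ k * p ^ 2)
    (h2np : ∃ d₁ d₂ : ℕ, d₁ ∣ n ∧ d₂ ∣ n ∧ 0 < d₁ ∧ 0 < d₂ ∧ d₁ ≠ d₂ ∧
      σ 1 n = 2 * n + d₁ + d₂) :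
    n = 18 ∨ n = 36 ∨ n = 200 := by
  obtain ⟨d₁, d₂, hd₁, hd₂, -, -, -, hσ⟩ := h2np
  subst hn
  obtain ⟨a, b, c, ha, hak, hb, hc, hE⟩ := exists_twoNearPerfectEq hp hpodd hd₁ hd₂ hσ
  have hp3 : (3 : ℤ) ≤ p := by
    have := hp.two_le
    obtain ⟨t, rfl⟩ := hpodd
    omega
  have h2n : 2 * (2 ^ k * p ^ 2) = 2 ^ (k + 1) * p ^ 2 := by ring
  rcases hE.eq_of_le_two hb hc (by exact_mod_cast hpodd) hp3 (by positivity)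
      (dvd_pow_self 2 ha.ne') (by rw [← pow_succ']; exact pow_dvd_pow 2 (by omega))
    with ⟨hp, hQ⟩ | ⟨hp, hQ⟩ | ⟨hp, hQ⟩ <;>
    · obtain rfl : p = _ := by exact_mod_cast hp
      rw [(by exact_mod_cast hQ : 2 ^ (k + 1) = _)] at h2n
      omega

theorem two_near_perfect_pow_two_mul_prime_sq
    (n k p : ℕ) (hk : 0 < k) (hp : p.Prime) (hpodd : Odd p)
    (hn : n = 2 ^ k * p ^ 2)
    (h2np : ∃ d₁ d₂ : ℕ, d₁ ∣ n ∧ d₂ ∣ n ∧ 0 < d₁ ∧ 0 < d₂ ∧ d₁ ≠ d₂ ∧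
      σ 1 n = 2 * n + d₁ + d₂) :
    n = 18 ∨ n = 36 ∨ n = 200 :=
  two_near_perfect_pow_two_mul_prime_sq_general n k p hp hpodd hn h2np
end

section
/- Let a and k be positive integers with 0 ≤ a ≤ k, and set D = 2^(2k+2) + 2^(k+2) − 2^(a+2) − 7. If D is a perfect square, then k = 1 and a = 1. -/
/-! With `x = 2^(k+1)` we have `D = x² + 2x - c` for `c = 2^(a+2) + 7`. For `k ≥ 2` we get
`0 ≤ c < 4x - 1`, so `D` lies strictly between `(x - 1)²` and `(x + 1)²`; being a square it equals
`x²`, i.e. the odd number `c` equals the even number `2x`. -/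

theorem Int.sq_eq_of_sub_one_sq_lt_of_lt_add_one_sq {m n : ℤ}
    (hlo : (n - 1) ^ 2 < m ^ 2) (hhi : m ^ 2 < (n + 1) ^ 2) : m ^ 2 = n ^ 2 := by
  rw [sq_lt_sq] at hlo hhi
  have hm : |m| = |n| := by
    rcases abs_cases n with ⟨hn, _⟩ | ⟨hn, _⟩ <;>
    rcases abs_cases (n - 1) with ⟨h1, _⟩ | ⟨h1, _⟩ <;>
    rcases abs_cases (n + 1) with ⟨h2, _⟩ | ⟨h2, _⟩ <;> omega
  rw [← sq_abs m, hm, sq_abs]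

theorem Int.eq_two_mul_of_sq_add_two_mul_sub_eq_sq {x c m : ℤ} (hc : 0 ≤ c) (hcx : c < 4 * x - 1)
    (hm : x ^ 2 + 2 * x - c = m ^ 2) : c = 2 * x := by
  have h := Int.sq_eq_of_sub_one_sq_lt_of_lt_add_one_sq (n := x) (m := m)
    (by nlinarith) (by nlinarith)
  linarith

theorem discriminant_sandwich_case_I_general
    (a k : ℕ) (ha : 0 < a) (hak : a ≤ k)
    (D : ℤ) (hD : D = 2 ^ (2 * k + 2) + 2 ^ (k + 2) - 2 ^ (a + 2) - 7)
    (hsq : ∃ m : ℤ, D = m ^ 2) :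
    k = 1 ∧ a = 1 := by
  suffices hk : k < 2 by omega
  by_contra! hk
  obtain ⟨m, hm⟩ := hsq
  have hpow_a : (2 : ℤ) ^ (a + 2) ≤ 2 ^ (k + 2) := pow_le_pow_right₀ (by norm_num) (by omega)
  have hpow_k : (16 : ℤ) ≤ 2 ^ (k + 2) :=
    le_trans (by norm_num) (pow_le_pow_right₀ (show (1 : ℤ) ≤ 2 by norm_num) (by omega : 4 ≤ k + 2))
  have hcx := Int.eq_two_mul_of_sq_add_two_mul_sub_eq_sq (x := 2 ^ (k + 1)) (c := 2 ^ (a + 2) + 7)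
    (m := m) (by positivity) (by linarith [pow_succ (2 : ℤ) (k + 1)])
    (by rw [← hm, hD]; ring)
  rw [pow_add, pow_succ] at hcx
  omega

theorem discriminant_sandwich_case_I
    (a k : ℕ) (ha : 0 < a) (hk : 0 < k) (hak : a ≤ k)
    (D : ℤ) (hD : D = 2 ^ (2 * k + 2) + 2 ^ (k + 2) - 2 ^ (a + 2) - 7)
    (hsq : ∃ m : ℤ, D = m ^ 2) :
    k = 1 ∧ a = 1 :=
  discriminant_sandwich_case_I_general a k ha hak D hD hsq
end

section
/- Let b and k be non-negative integers and let p be an odd positive integer such that (2^(k+1) − 1)(p^2 + p + 1) = 2^(k+1) · p^2 + 2^b · p + 1. Then p divides 2^k − 1 and p + 1 divides 2^b − 2. -/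
/-! Expanding the hypothesis gives `2 ^ (k + 1) * (p + 1) - 2 = p * (p + 1 + 2 ^ b)`.
Reducing modulo `p` gives `p ∣ 2 * (2 ^ k - 1)`, and `p` is odd; reducing modulo `p + 1`,
where `p ≡ -1`, gives `2 ^ b ≡ 2`. -/

theorem case_III_j_eq_one_divisibility_general
    (k b : ℕ) (p : ℤ) (hpodd : Odd p)
    (heq : (2 ^ (k + 1) - 1) * (p ^ 2 + p + 1) = 2 ^ (k + 1) * p ^ 2 + 2 ^ b * p + 1) :
    p ∣ 2 ^ k - 1 ∧ (p + 1) ∣ 2 ^ b - 2 := by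
  have hp : p ∣ 2 * (2 ^ k - 1) :=
    ⟨2 ^ b - 2 ^ (k + 1) + p + 1, by linear_combination heq⟩
  exact ⟨(Int.isCoprime_two_right.mpr hpodd).dvd_of_dvd_mul_left hp,
    ⟨2 ^ b - 2 ^ (k + 1) + p, by linear_combination heq⟩⟩

theorem case_III_j_eq_one_divisibility
    (k b : ℕ) (p : ℤ) (hpodd : Odd p) (hppos : 0 < p)
    (heq : (2 ^ (k + 1) - 1) * (p ^ 2 + p + 1) = 2 ^ (k + 1) * p ^ 2 + 2 ^ b * p + 1) :
    p ∣ 2 ^ k - 1 ∧ (p + 1) ∣ 2 ^ b - 2 :=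
  case_III_j_eq_one_divisibility_general k b p hpodd heq
end

section
/- There are no integers k, b with 2 ≤ b ≤ k − 1 and odd positive integer p satisfying the equation (2^(k+1) − 1)(p^2 + p + 1) = 2^(k+1) · p^2 + 2^b · p + 1. -/
/-!
With `X = 2 ^ (k + 1)`, `B = 2 ^ b` and `A = X - B - 1`, the equation is the quadratic
`p ^ 2 - A * p - (X - 2) = 0`, whose discriminant `A ^ 2 + 4 * X - 8` must then be the square
`(2 * p - A) ^ 2`. For `2 < B` and `2 * B < X + 4` it lies strictly between `(A + 2) ^ 2` and
`(A + 4) ^ 2`, so it would equal `(A + 3) ^ 2`, i.e. `4 * X = 6 * A + 17`, which is impossible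
by parity.
-/

lemma sq_eq_add_one_sq_of_sq_lt_of_lt_add_two_sq {a t : ℤ} (ha : 0 ≤ a) (h₁ : a ^ 2 < t ^ 2)
    (h₂ : t ^ 2 < (a + 2) ^ 2) : t ^ 2 = (a + 1) ^ 2 := by
  rw [sq_lt_sq, abs_of_nonneg ha] at h₁
  rw [sq_lt_sq, abs_of_nonneg (by linarith : 0 ≤ a + 2)] at h₂
  have ht : |t| = a + 1 := by omega
  rw [← sq_abs, ht]

lemma sub_one_mul_ne_of_two_lt {X B : ℤ} (hB : 2 < B) (hBX : 2 * B < X + 4) (p : ℤ) :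
    (X - 1) * (p ^ 2 + p + 1) ≠ X * p ^ 2 + B * p + 1 := by
  intro h
  set A := X - B - 1
  have hdisc : (2 * p - A) ^ 2 = A ^ 2 + 4 * X - 8 := by linear_combination (-4 : ℤ) * h
  have hsq : (2 * p - A) ^ 2 = (A + 2 + 1) ^ 2 :=
    sq_eq_add_one_sq_of_sq_lt_of_lt_add_two_sq (by omega) (by rw [hdisc]; linarith)
      (by rw [hdisc]; linarith)
  have hpar : 4 * X = 6 * A + 17 := by linear_combination hsq - hdisc
  omega

theorem case_III_j_eq_one_no_solutions :
    ¬ ∃ (k b : ℕ) (p : ℤ), 2 ≤ b ∧ b ≤ k - 1 ∧ Odd p ∧ 0 < p ∧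
      (2 ^ (k + 1) - 1) * (p ^ 2 + p + 1) = 2 ^ (k + 1) * p ^ 2 + 2 ^ b * p + 1 := by
  rintro ⟨k, b, p, hb, hbk, -, -, heq⟩
  have hB : (2 : ℤ) < 2 ^ b :=
    calc (2 : ℤ) < 2 ^ 2 := by norm_num
      _ ≤ 2 ^ b := pow_le_pow_right₀ (by norm_num) hb
  have hBX : 2 * 2 ^ b < (2 : ℤ) ^ (k + 1) + 4 :=
    calc 2 * 2 ^ b = (2 : ℤ) ^ (b + 1) := by ring
      _ ≤ 2 ^ (k + 1) := pow_le_pow_right₀ (by norm_num) (by omega)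
      _ < 2 ^ (k + 1) + 4 := by linarith
  exact sub_one_mul_ne_of_two_lt hB hBX p heq
end

section
/- There is no 2-near perfect number n = 2^k · p^2 (p an odd prime, k a positive integer) whose omitted divisors have the form d₁ = 2^a with 0 < a ≤ k, and d₂ = p^m with m ∈ {1, 2}. -/
open ArithmeticFunction
open scoped ArithmeticFunction.sigma

/-!
Since `2 ^ k` and `p ^ 2` are coprime, `σ n = (2 ^ (k + 1) - 1) (1 + p + p ^ 2)`, and the
near-perfect equation becomes `2 ^ (k + 1) (p + 1) = 1 + p + p ^ 2 + 2 ^ a + p ^ m` with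
`2 ^ a ≤ 2 ^ k`.

For `m = 1` it reads `(p + 1) (2 ^ (k + 1) - (p + 1)) = 2 ^ a`; but a positive product
`x (N - x)` of integers is at least `N - 1 = 2 ^ (k + 1) - 1 > 2 ^ k`.

For `m = 2` it reads `(p + 1) (2 ^ (k + 1) - 2 p + 1) = 2 ^ a + 2`, so the second factor is
positive and `p ≤ 2 ^ k`; comparing sizes gives `2 ^ k (2 p + 1) < (p + 1) (2 p + 1)`, so
`2 ^ k ≤ p`. Hence `p = 2 ^ k`, which is not odd.
-/

theorem sigma_one_two_pow_mul_sq {p : ℕ} (hp : p.Prime) (hodd : Odd p) (k : ℕ) :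
    σ 1 (2 ^ k * p ^ 2) = (2 ^ (k + 1) - 1) * (1 + p + p ^ 2) := by
  rw [isMultiplicative_sigma.map_mul_of_coprime ((Nat.coprime_two_left.mpr hodd).pow k 2),
    sigma_one_apply_prime_pow Nat.prime_two, sigma_one_apply_prime_pow hp,
    Nat.geomSum_eq le_rfl]
  simp [Finset.sum_range_succ]

theorem two_pow_succ_mul_succ_eq_of_sigma {p k e : ℕ} (hp : p.Prime) (hodd : Odd p)
    (h : σ 1 (2 ^ k * p ^ 2) = 2 * (2 ^ k * p ^ 2) + e) :
    2 ^ (k + 1) * (p + 1) = 1 + p + p ^ 2 + e := by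
  rw [sigma_one_two_pow_mul_sq hp hodd] at h
  zify [Nat.one_le_two_pow] at h ⊢
  linear_combination h

theorem sub_one_le_mul_sub {N x : ℤ} (hx : 0 < x) (h : 0 < x * (N - x)) :
    N - 1 ≤ x * (N - x) := by
  have hNx : 0 < N - x := pos_of_mul_pos_right h hx.le
  nlinarith

theorem two_pow_succ_mul_succ_ne_of_exp_one {k a : ℕ} (hk : 0 < k) (hak : a ≤ k) (p : ℕ) :
    2 ^ (k + 1) * (p + 1) ≠ 1 + p + p ^ 2 + 2 ^ a + p := by
  intro h
  zify at h
  have hprod : ((p : ℤ) + 1) * (2 ^ (k + 1) - (p + 1)) = 2 ^ a := by linear_combination h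
  have hbound := sub_one_le_mul_sub (by positivity) (hprod ▸ (by positivity : (0 : ℤ) < 2 ^ a))
  have h2a : (2 : ℤ) ^ a ≤ 2 ^ k := pow_le_pow_right₀ one_le_two hak
  have h2k : (2 : ℤ) ≤ 2 ^ k := le_self_pow₀ one_le_two hk.ne'
  rw [hprod, pow_succ] at hbound
  linarith

theorem two_pow_succ_mul_succ_ne_of_exp_two {k a p : ℕ} (hk : 0 < k) (hak : a ≤ k)
    (hodd : Odd p) : 2 ^ (k + 1) * (p + 1) ≠ 1 + p + p ^ 2 + 2 ^ a + p ^ 2 := by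
  intro h
  have h2a : 2 ^ a ≤ 2 ^ k := Nat.pow_le_pow_right two_pos hak
  rw [pow_succ] at h
  have hle : p ≤ 2 ^ k := by
    zify at h ⊢
    have hprod : ((p : ℤ) + 1) * (2 ^ k * 2 - 2 * p + 1) = 2 ^ a + 2 := by linear_combination h
    have hpos : (0 : ℤ) < 2 ^ k * 2 - 2 * p + 1 :=
      pos_of_mul_pos_right (hprod ▸ (by positivity : (0 : ℤ) < 2 ^ a + 2)) (by positivity)
    omega
  have hge : 2 ^ k ≤ p := by
    have : 2 ^ k * (2 * p + 1) < (p + 1) * (2 * p + 1) := by linarith [hodd.pos]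
    exact Nat.le_of_lt_succ (Nat.lt_of_mul_lt_mul_right this)
  rw [le_antisymm hle hge] at hodd
  exact Nat.not_odd_iff_even.mpr (Nat.even_pow.mpr ⟨even_two, hk.ne'⟩) hodd

theorem case_2_no_solutions :
    ¬ ∃ (n k p d₁ d₂ a m : ℕ), 0 < k ∧ p.Prime ∧ Odd p ∧
      n = 2 ^ k * p ^ 2 ∧
      d₁ ∣ n ∧ d₂ ∣ n ∧ 0 < d₁ ∧ 0 < d₂ ∧ d₁ ≠ d₂ ∧
      σ 1 n = 2 * n + d₁ + d₂ ∧
      0 < a ∧ a ≤ k ∧ d₁ = 2 ^ a ∧ (m = 1 ∨ m = 2) ∧ d₂ = p ^ m := by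
  rintro ⟨n, k, p, d₁, d₂, a, m, hk, hp, hodd, rfl, -, -, -, -, -, hσ, -, hak, rfl, hm, rfl⟩
  have h := two_pow_succ_mul_succ_eq_of_sigma hp hodd (hσ.trans (add_assoc _ _ _))
  rw [← add_assoc] at h
  rcases hm with rfl | rfl
  · exact two_pow_succ_mul_succ_ne_of_exp_one hk hak p (by rwa [pow_one] at h)
  · exact two_pow_succ_mul_succ_ne_of_exp_two hk hak hodd h
end

section
/- Let p be an odd positive integer and let k and b be positive integers such that (2^(k+1) − 1)(p^2 + p + 1) = 2^(k+1) · p^2 + 2^b · p^2 + 1. Then p + 1 divides 2^b + 2. -/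
theorem case_III_j_eq_two_p_add_one_divides_general
    (k b : ℕ) (p : ℤ)
    (heq : (2 ^ (k + 1) - 1) * (p ^ 2 + p + 1) = 2 ^ (k + 1) * p ^ 2 + 2 ^ b * p ^ 2 + 1) :
    (p + 1) ∣ 2 ^ b + 2 := by
  -- Modulo `p + 1` we have `p ≡ -1`, so `heq` reads `2 ^ (k + 1) - 1 ≡ 2 ^ (k + 1) + 2 ^ b + 1`.
  have hsq : p + 1 ∣ p ^ 2 - 1 := ⟨p - 1, by ring⟩
  have key : (2 : ℤ) ^ b + 2 = (p + 1) * (2 ^ (k + 1) - 1) - (2 ^ b + 1) * (p ^ 2 - 1) := by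
    linear_combination -heq
  rw [key]
  exact dvd_sub (dvd_mul_right _ _) (hsq.mul_left _)

theorem case_III_j_eq_two_p_add_one_divides
    (k b : ℕ) (p : ℤ) (hk : 0 < k) (hb : 0 < b) (hpodd : Odd p) (hppos : 0 < p)
    (heq : (2 ^ (k + 1) - 1) * (p ^ 2 + p + 1) = 2 ^ (k + 1) * p ^ 2 + 2 ^ b * p ^ 2 + 1) :
    (p + 1) ∣ 2 ^ b + 2 :=
  case_III_j_eq_two_p_add_one_divides_general k b p heq
end

section
/- Let n = 2^k · p be a strongly 2-near perfect number with p an odd prime and k, a positive integers satisfying 0 < a ≤ k and p · (1 + 2^(k−a)) = 2^(k+1) − 2^a − 1. Then k < 2a. -/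
/-!
Put m = k - a and suppose m ≥ a. The hypothesis rearranges to
(2^(a+1) - p) * (1 + 2^m) = 3 * 2^a + 1, and since 2^m ≥ 2^a the integer factor 2^(a+1) - p
must be 1 or 2: the first gives 2^m = 3 * 2^a, the second an even number equal to an odd one.
-/

open ArithmeticFunction
open scoped ArithmeticFunction.sigma

theorem mul_one_add_two_pow_ne_three_mul_two_pow_add_one {q : ℤ} {a m : ℕ}
    (ha : 0 < a) (ham : a ≤ m) : q * (1 + 2 ^ m) ≠ 3 * 2 ^ a + 1 := by
  intro h
  have h2a : (0 : ℤ) < 2 ^ a := by positivity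
  have hmono : (2 : ℤ) ^ a ≤ 2 ^ m := pow_le_pow_right₀ (by norm_num) ham
  have hq_pos : 0 < q := by
    by_contra! hq
    nlinarith [mul_nonpos_of_nonpos_of_nonneg hq (by positivity : (0 : ℤ) ≤ 1 + 2 ^ m)]
  have hq_lt : q < 3 := by nlinarith
  interval_cases q
  · have h3 : (2 : ℕ) ^ m = 3 * 2 ^ a := by exact_mod_cast (by linarith : (2 : ℤ) ^ m = 3 * 2 ^ a)
    have : 3 ∣ 2 := Nat.prime_three.dvd_of_dvd_pow (h3 ▸ dvd_mul_right 3 _)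
    omega
  · obtain ⟨b, rfl⟩ : ∃ b, a = b + 1 := ⟨a - 1, by omega⟩
    rw [pow_succ] at h
    generalize (2 : ℤ) ^ m = X at h
    generalize (2 : ℤ) ^ b = Y at h
    omega

theorem strongly_two_near_perfect_k_lt_two_a_general
    (k a p : ℕ) (ha : 0 < a)
    (heq : p * (1 + 2 ^ (k - a)) = 2 ^ (k + 1) - 2 ^ a - 1) :
    k < 2 * a := by
  by_contra! hka
  obtain ⟨m, rfl⟩ := Nat.exists_eq_add_of_le (show a ≤ k by omega)
  rw [Nat.add_sub_cancel_left] at heq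
  have hsplit : 2 ^ (a + m + 1) = 2 ^ (a + 1) * 2 ^ m := by rw [← pow_add]; ring_nf
  have hlt : 2 ^ a < 2 ^ (a + m + 1) := Nat.pow_lt_pow_right one_lt_two (by omega)
  have hnat : p * (1 + 2 ^ m) + 2 ^ a + 1 = 2 ^ (a + 1) * 2 ^ m := by omega
  have hint : (p : ℤ) * (1 + 2 ^ m) + 2 ^ a + 1 = 2 ^ (a + 1) * 2 ^ m := by exact_mod_cast hnat
  exact mul_one_add_two_pow_ne_three_mul_two_pow_add_one (q := 2 ^ (a + 1) - p) ha
    (show a ≤ m by omega) (by linear_combination -hint)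

theorem strongly_two_near_perfect_k_lt_two_a
    (n k a p : ℕ) (hk : 0 < k) (ha : 0 < a) (hak : a ≤ k)
    (hp : p.Prime) (hpodd : Odd p) (hn : n = 2 ^ k * p)
    (hstrong : ∃ d₁ d₂ : ℕ, d₁ ∣ n ∧ d₂ ∣ n ∧ 0 < d₁ ∧ 0 < d₂ ∧ d₁ ≠ d₂ ∧
      d₁ * d₂ = n ∧ σ 1 n = 2 * n + d₁ + d₂)
    (heq : p * (1 + 2 ^ (k - a)) = 2 ^ (k + 1) - 2 ^ a - 1) :
    k < 2 * a :=
  strongly_two_near_perfect_k_lt_two_a_general k a p ha heq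
end

section
/- Let n = 2^k · p be a strongly 2-near perfect number with p an odd prime and k, a positive integers satisfying 0 < a ≤ k and p · (1 + 2^(k−a)) = 2^(k+1) − 2^a − 1. Then k = a + 2, the omitted divisors are d₁ = 2^a and d₂ = 4p, p satisfies 5p = 2^(a+3) − 2^a − 1, and a ≡ 3 (mod 4). -/
open ArithmeticFunction
open scoped ArithmeticFunction.sigma

/-!
Since `σ(2^k p) = (2^(k+1) - 1)(p + 1)`, the condition on `σ(n)` says `d₁ + d₂ + p + 1 = 2^(k+1)`,
while the hypothesis on `p` says the same of the complementary pair `(2^a, 2^(k-a) p)`. The sum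
`2^i + 2^(k-i) p` of a complementary pair determines `i`, so `{d₁, d₂} = {2^a, 2^(k-a) p}`.
With `k = a + m` the hypothesis rearranges to `p (2^m + 1) + 3·2^a + 1 = 2^(a+1) (2^m + 1)`, so
`2^m + 1 ∣ 3·2^a + 1`. Reducing `2^a` with `2^m ≡ -1` leaves `±3·2^s + 1` with `s < m`, too small
to be a multiple of `2^m + 1` unless `3·2^s - 1 = 2^m + 1`; this forces `m = 2`, `s = 1` and an odd
quotient `a / 2`, i.e. `a ≡ 3 (mod 4)`.
-/

theorem sigma_one_two_pow_mul_prime {k p : ℕ} (hp : p.Prime) (hodd : Odd p) :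
    σ 1 (2 ^ k * p) = (2 ^ (k + 1) - 1) * (p + 1) := by
  have hσ2 : σ 1 (2 ^ k) = 2 ^ (k + 1) - 1 := by
    rw [sigma_one_apply_prime_pow Nat.prime_two, Nat.geomSum_eq le_rfl]
    norm_num
  have hσp : σ 1 p = p + 1 := by
    rw [sigma_one_apply, hp.sum_divisors]
  rw [isMultiplicative_sigma.map_mul_of_coprime ((Nat.coprime_two_left.mpr hodd).pow_left k),
    hσ2, hσp]

theorem add_add_prime_add_one_eq_two_pow {k p d₁ d₂ : ℕ} (hp : p.Prime) (hodd : Odd p)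
    (hσ : σ 1 (2 ^ k * p) = 2 * (2 ^ k * p) + d₁ + d₂) :
    d₁ + d₂ + p + 1 = 2 ^ (k + 1) := by
  rw [sigma_one_two_pow_mul_prime hp hodd] at hσ
  have h2 : (2 ^ (k + 1) - 1) * (p + 1) + (p + 1) = 2 ^ (k + 1) * (p + 1) := by
    rw [← Nat.succ_mul, Nat.succ_eq_add_one, Nat.sub_add_cancel Nat.one_le_two_pow]
  rw [hσ, pow_succ] at h2
  rw [pow_succ]
  linarith

theorem exists_two_pow_of_mul_eq_two_pow_mul {k p e f : ℕ} (hp : p.Prime)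
    (h : e * f = 2 ^ k * p) (hpf : p ∣ f) : ∃ i ≤ k, e = 2 ^ i ∧ f = 2 ^ (k - i) * p := by
  obtain ⟨c, rfl⟩ := hpf
  have hec : e * c = 2 ^ k :=
    Nat.eq_of_mul_eq_mul_right hp.pos (by rw [← h]; ring)
  obtain ⟨i, hik, rfl⟩ := (Nat.dvd_prime_pow Nat.prime_two).mp (Dvd.intro c hec)
  have hc : c = 2 ^ (k - i) :=
    Nat.eq_of_mul_eq_mul_left (pow_pos two_pos i) (by rw [hec, ← pow_add, Nat.add_sub_cancel' hik])
  exact ⟨i, hik, rfl, by rw [hc, mul_comm]⟩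

theorem eq_of_two_pow_add_two_pow_mul_eq {k p i j : ℕ} (hodd : Odd p) (hp1 : p ≠ 1)
    (hi : i ≤ k) (hj : j ≤ k) (h : 2 ^ i + 2 ^ (k - i) * p = 2 ^ j + 2 ^ (k - j) * p) :
    i = j := by
  wlog hij : i < j generalizing i j
  · rcases (not_lt.mp hij).lt_or_eq with hji | rfl
    · exact (this hj hi h.symm hji).symm
    · rfl
  exfalso
  obtain ⟨r, rfl⟩ := Nat.exists_eq_add_of_le hij.le
  obtain ⟨t, rfl⟩ := Nat.exists_eq_add_of_le hj
  rw [show i + r + t - i = t + r by omega, Nat.add_sub_cancel_left, pow_add, pow_add] at h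
  have hR : 2 ≤ 2 ^ r := Nat.le_self_pow (by omega) 2
  -- `h` says `(2^t p - 2^i)(2^r - 1) = 0`
  have hpt : 2 ^ t * p = 2 ^ i := by nlinarith
  exact hp1 (Nat.Coprime.eq_one_of_dvd ((Nat.coprime_two_right.mpr hodd).pow_right i)
    (Dvd.intro_left _ hpt))

theorem eq_two_pow_of_mul_eq_of_add_eq {k p a e f : ℕ} (hp : p.Prime) (hodd : Odd p)
    (ha : a ≤ k) (hmul : e * f = 2 ^ k * p) (hpf : p ∣ f)
    (hsum : e + f = 2 ^ a + 2 ^ (k - a) * p) : e = 2 ^ a ∧ f = 2 ^ (k - a) * p := by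
  obtain ⟨i, hi, rfl, rfl⟩ := exists_two_pow_of_mul_eq_two_pow_mul hp hmul hpf
  obtain rfl := eq_of_two_pow_add_two_pow_mul_eq hodd hp.ne_one hi ha hsum
  exact ⟨rfl, rfl⟩

theorem eq_two_pow_or_eq_two_pow_of_mul_eq_of_add_eq {k p a d₁ d₂ : ℕ} (hp : p.Prime)
    (hodd : Odd p) (ha : a ≤ k) (hmul : d₁ * d₂ = 2 ^ k * p)
    (hsum : d₁ + d₂ = 2 ^ a + 2 ^ (k - a) * p) :
    (d₁ = 2 ^ a ∧ d₂ = 2 ^ (k - a) * p) ∨ (d₂ = 2 ^ a ∧ d₁ = 2 ^ (k - a) * p) := by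
  rcases hp.dvd_mul.mp (hmul ▸ dvd_mul_left p _) with hpd | hpd
  · exact .inr (eq_two_pow_of_mul_eq_of_add_eq hp hodd ha (by rw [mul_comm, hmul]) hpd
      (by rw [add_comm, hsum]))
  · exact .inl (eq_two_pow_of_mul_eq_of_add_eq hp hodd ha hmul hpd hsum)

theorem eq_one_and_eq_two_of_three_mul_two_pow_eq {s m : ℕ} (hs : s < m)
    (h : 3 * 2 ^ s = 2 ^ m + 2) : s = 1 ∧ m = 2 := by
  have hms : m = s + 1 := by
    by_contra hne
    have : 2 ^ (s + 2) ≤ 2 ^ m := Nat.pow_le_pow_right two_pos (by omega)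
    rw [pow_add] at this
    omega
  subst hms
  have hs1 : s = 1 := by
    rw [pow_succ] at h
    exact Nat.pow_right_injective le_rfl (show 2 ^ s = 2 ^ 1 by omega)
  exact ⟨hs1, by omega⟩

theorem two_pow_add_one_dvd_three_mul_two_pow_add_one {m a : ℕ} (hm : m ≠ 0)
    (h : 2 ^ m + 1 ∣ 3 * 2 ^ a + 1) : m = 2 ∧ a % 4 = 3 := by
  obtain ⟨q, s, hs, rfl⟩ : ∃ q s, s < m ∧ a = m * q + s :=
    ⟨a / m, a % m, Nat.mod_lt a (Nat.pos_of_ne_zero hm), (Nat.div_add_mod a m).symm⟩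
  have hsm : 2 * 2 ^ s ≤ 2 ^ m := by
    rw [← pow_succ']
    exact Nat.pow_le_pow_right two_pos hs
  have hmod : (3 * 2 ^ (m * q + s) + 1 : ℤ) ≡ 3 * (-1) ^ q * 2 ^ s + 1 [ZMOD 2 ^ m + 1] := by
    have h2m : (2 : ℤ) ^ m ≡ -1 [ZMOD 2 ^ m + 1] := Int.modEq_iff_dvd.mpr ⟨-1, by ring⟩
    rw [pow_add, pow_mul, ← mul_assoc]
    gcongr
  have hdvd : (2 ^ m + 1 : ℤ) ∣ 3 * (-1) ^ q * 2 ^ s + 1 :=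
    (Int.ModEq.dvd_iff hmod).mp (by exact_mod_cast h)
  rcases Nat.even_or_odd q with hq | hq
  · exfalso
    rw [hq.neg_one_pow, mul_one] at hdvd
    have hval : 3 * 2 ^ s + 1 = 2 ^ m + 1 :=
      Nat.eq_of_dvd_of_lt_two_mul (Nat.succ_ne_zero _) (by exact_mod_cast hdvd) (by omega)
    have h3 : 3 ∣ 2 ^ m := ⟨2 ^ s, by omega⟩
    exact absurd (Nat.prime_three.dvd_of_dvd_pow h3) (by norm_num)
  · rw [hq.neg_one_pow] at hdvd
    have hpos : 1 ≤ 3 * 2 ^ s := Nat.one_le_iff_ne_zero.mpr (by positivity)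
    have hdvd' : 2 ^ m + 1 ∣ 3 * 2 ^ s - 1 := by
      rw [← Int.natCast_dvd_natCast]
      push_cast [hpos]
      rw [show (3 * 2 ^ s - 1 : ℤ) = -(3 * -1 * 2 ^ s + 1) by ring]
      exact dvd_neg.mpr hdvd
    have hval : 3 * 2 ^ s - 1 = 2 ^ m + 1 :=
      Nat.eq_of_dvd_of_lt_two_mul (by omega) hdvd' (by omega)
    obtain ⟨rfl, rfl⟩ := eq_one_and_eq_two_of_three_mul_two_pow_eq hs (by omega)
    obtain ⟨t, rfl⟩ := hq
    omega

theorem two_pow_add_one_dvd_of_mul_one_add_two_pow_add_eq {p a m : ℕ}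
    (h : p * (1 + 2 ^ m) + 2 ^ a + 1 = 2 ^ (a + m + 1)) : 2 ^ m + 1 ∣ 3 * 2 ^ a + 1 := by
  have hid : p * (2 ^ m + 1) + (3 * 2 ^ a + 1) = (2 ^ m + 1) * 2 ^ (a + 1) := by
    rw [pow_succ, pow_add] at *
    linear_combination h
  exact (Nat.dvd_add_right (dvd_mul_left _ p)).mp (hid ▸ dvd_mul_right _ _)

theorem ne_zero_of_mul_one_add_two_pow_add_eq {p a m : ℕ} (hp : 0 < p)
    (h : p * (1 + 2 ^ m) + 2 ^ a + 1 = 2 ^ (a + m + 1)) : m ≠ 0 := by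
  rintro rfl
  -- `h` reads `2p + 1 = 2^a`
  rcases a with _ | a
  · omega
  · rw [pow_succ, pow_succ] at h
    omega

theorem strongly_two_near_perfect_description_general
    (n k a p d₁ d₂ : ℕ)
    (hp : p.Prime) (hpodd : Odd p) (hn : n = 2 ^ k * p)
    (hmul : d₁ * d₂ = n)
    (hσ : σ 1 n = 2 * n + d₁ + d₂)
    (heq : p * (1 + 2 ^ (k - a)) = 2 ^ (k + 1) - 2 ^ a - 1) :
    k = a + 2 ∧
      ((d₁ = 2 ^ a ∧ d₂ = 4 * p) ∨ (d₂ = 2 ^ a ∧ d₁ = 4 * p)) ∧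
      5 * p = 2 ^ (a + 3) - 2 ^ a - 1 ∧ a % 4 = 3 := by
  subst hn
  have hsum := add_add_prime_add_one_eq_two_pow hp hpodd hσ
  have hpos : 0 < p * (1 + 2 ^ (k - a)) := Nat.mul_pos hp.pos (by positivity)
  have hak : a ≤ k := Nat.lt_succ_iff.mp <| (Nat.pow_lt_pow_iff_right (by norm_num)).mp
    (show 2 ^ a < 2 ^ (k + 1) by omega)
  obtain ⟨m, rfl⟩ := Nat.exists_eq_add_of_le hak
  rw [Nat.add_sub_cancel_left] at heq hpos
  have heq' : p * (1 + 2 ^ m) + 2 ^ a + 1 = 2 ^ (a + m + 1) := by omega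
  obtain ⟨rfl, ha4⟩ := two_pow_add_one_dvd_three_mul_two_pow_add_one
    (ne_zero_of_mul_one_add_two_pow_add_eq hp.pos heq')
    (two_pow_add_one_dvd_of_mul_one_add_two_pow_add_eq heq')
  have hpair := eq_two_pow_or_eq_two_pow_of_mul_eq_of_add_eq hp hpodd le_self_add hmul
    (by rw [Nat.add_sub_cancel_left]; omega)
  rw [Nat.add_sub_cancel_left] at hpair
  exact ⟨rfl, hpair, by rw [show a + 3 = a + 2 + 1 from rfl, ← heq]; ring, ha4⟩

theorem strongly_two_near_perfect_description
    (n k a p d₁ d₂ : ℕ) (hk : 0 < k) (ha : 0 < a) (hak : a ≤ k)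
    (hp : p.Prime) (hpodd : Odd p) (hn : n = 2 ^ k * p)
    (hd₁ : d₁ ∣ n) (hd₂ : d₂ ∣ n) (hd₁pos : 0 < d₁) (hd₂pos : 0 < d₂)
    (hne : d₁ ≠ d₂) (hmul : d₁ * d₂ = n)
    (hσ : σ 1 n = 2 * n + d₁ + d₂)
    (heq : p * (1 + 2 ^ (k - a)) = 2 ^ (k + 1) - 2 ^ a - 1) :
    k = a + 2 ∧
      ((d₁ = 2 ^ a ∧ d₂ = 4 * p) ∨ (d₂ = 2 ^ a ∧ d₁ = 4 * p)) ∧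
      5 * p = 2 ^ (a + 3) - 2 ^ a - 1 ∧ a % 4 = 3 :=
  strongly_two_near_perfect_description_general n k a p d₁ d₂ hp hpodd hn hmul hσ heq
end

section
/- Let a and b be positive integers. If 2^b + 1 divides 3 · 2^a + 1, then b = 2. -/
/-!
Modulo `m = 2^b + 1` we have `2^b ≡ -1`, so writing `a = q b + r` with `r < b`, `m` divides
`3·2^r + 1` or `3·2^r - 1` according to the parity of `q`. Both numbers are positive and
smaller than `2m`, hence equal to `m`. The first case gives `3 ∣ 2^b`; the second gives
`3·2^r = 2^b + 2`, and comparing powers of two forces `r = 1`, `b = 2`.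
-/

theorem Int.eq_of_dvd_of_lt_two_mul {m c : ℤ} (hc : 0 < c) (hdvd : m ∣ c) (hlt : c < 2 * m) :
    c = m := by
  lift c to ℕ using hc.le
  lift m to ℕ using by omega
  exact_mod_cast Nat.eq_of_dvd_of_lt_two_mul (by omega) (by exact_mod_cast hdvd)
    (by exact_mod_cast hlt)

theorem Int.pow_modEq_neg_one_pow_mul_pow_mod {n x : ℤ} {b : ℕ} (h : x ^ b ≡ -1 [ZMOD n])
    (a : ℕ) : x ^ a ≡ (-1) ^ (a / b) * x ^ (a % b) [ZMOD n] := by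
  conv_lhs => rw [← Nat.div_add_mod a b, pow_add, pow_mul]
  exact (h.pow _).mul_right _

theorem two_pow_modEq_neg_one (b : ℕ) : (2 : ℤ) ^ b ≡ -1 [ZMOD 2 ^ b + 1] :=
  Int.modEq_iff_dvd.mpr ⟨-1, by ring⟩

theorem three_mul_two_pow_add_one_lt {r b : ℕ} (hr : r < b) :
    (3 : ℤ) * 2 ^ r + 1 < 2 * (2 ^ b + 1) := by
  have : (2 : ℤ) ^ (r + 1) ≤ 2 ^ b := pow_le_pow_right₀ (by norm_num) hr
  rw [pow_succ] at this
  linarith [pow_pos (two_pos : (0 : ℤ) < 2) r]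

theorem not_two_pow_add_one_dvd_three_mul_two_pow_add_one {r b : ℕ} (hr : r < b) :
    ¬ (2 : ℤ) ^ b + 1 ∣ 3 * 2 ^ r + 1 := by
  intro h
  have heq := Int.eq_of_dvd_of_lt_two_mul (by positivity) h (three_mul_two_pow_add_one_lt hr)
  have h3 : 3 ∣ 2 ^ b := ⟨2 ^ r, by exact_mod_cast (add_right_cancel heq).symm⟩
  have := Nat.prime_three.dvd_of_dvd_pow h3
  omega

theorem eq_two_of_three_mul_two_pow_eq_two_pow_add_two {r b : ℕ} (hr : r < b)
    (h : 3 * 2 ^ r = 2 ^ b + 2) : b = 2 := by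
  obtain ⟨k, rfl⟩ := Nat.exists_eq_add_of_lt hr
  rcases r with _ | _ | r
  · have : 2 ≤ 2 ^ (k + 1) := Nat.le_self_pow (by omega) 2
    omega
  · have h4 : 2 ^ (k + 2) = 2 ^ 2 := by
      rw [show 0 + 1 + k + 1 = k + 2 by ring] at h
      omega
    have := Nat.pow_right_injective le_rfl h4
    omega
  · -- reduce `h` modulo 4
    have h4 : ∀ n ≥ 2, 4 ∣ 2 ^ n := fun n hn => pow_dvd_pow 2 hn
    have := h4 (r + 1 + 1) (by omega)
    have := h4 (r + 1 + 1 + k + 1) (by omega)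
    omega

theorem eq_two_of_two_pow_add_one_dvd_three_mul_two_pow_sub_one {r b : ℕ} (hr : r < b)
    (h : (2 : ℤ) ^ b + 1 ∣ 3 * 2 ^ r - 1) : b = 2 := by
  have hpos : (0 : ℤ) < 3 * 2 ^ r - 1 := by
    have : (1 : ℤ) ≤ 2 ^ r := one_le_pow₀ (by norm_num)
    linarith
  have heq := Int.eq_of_dvd_of_lt_two_mul hpos h
    (by linarith [three_mul_two_pow_add_one_lt hr])
  refine eq_two_of_three_mul_two_pow_eq_two_pow_add_two hr ?_
  exact_mod_cast (by linarith : (3 : ℤ) * 2 ^ r = 2 ^ b + 2)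

theorem two_pow_add_one_dvd_general (a b : ℕ) (hb : 0 < b)
    (h : 2 ^ b + 1 ∣ 3 * 2 ^ a + 1) : b = 2 := by
  have hr : a % b < b := Nat.mod_lt a hb
  have hdvd : (2 : ℤ) ^ b + 1 ∣ 3 * ((-1) ^ (a / b) * 2 ^ (a % b)) + 1 := by
    have hmod := ((Int.pow_modEq_neg_one_pow_mul_pow_mod (two_pow_modEq_neg_one b) a).mul_left
      3).add_right 1
    exact hmod.dvd_iff.mp (by exact_mod_cast h)
  rcases (a / b).even_or_odd with heven | hodd
  · rw [heven.neg_one_pow, one_mul] at hdvd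
    exact absurd hdvd (not_two_pow_add_one_dvd_three_mul_two_pow_add_one hr)
  · rw [hodd.neg_one_pow] at hdvd
    exact eq_two_of_two_pow_add_one_dvd_three_mul_two_pow_sub_one hr
      ((dvd_neg.mpr hdvd).trans (dvd_of_eq (by ring)))

theorem two_pow_add_one_dvd (a b : ℕ) (ha : 0 < a) (hb : 0 < b)
    (h : 2 ^ b + 1 ∣ 3 * 2 ^ a + 1) : b = 2 :=
  two_pow_add_one_dvd_general a b hb h
end
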